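/- arXiv:1605.08664 — 2 statements merged into one kernel-verified Lean document; each statement's English description precedes it below -/
import Mathlib

section
/- Let C_1, …, C_m be finite sets, let s ≥ 1, and let OPT denote the maximum, over all index sets J with |J| ≤ s, of |⋃_{j∈J} C_j|. Let j_1, j_2, …, j_k be any sequence of indices such that for each t ≤ k, the set C_{j_t} maximizes |C_j \ ⋃_{r<t} C_{j_r}| over all j ∈ {1, …, m}. Then |⋃_{t≤k} C_{j_t}| ≥ (1 − (1 − 1/s)^k) · OPT. -/
/-- Greedy coverage bound: if at each step `t < k` the set `C (j t)` covers the
largest number of elements not yet covered by the previously chosen sets, then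
the union of the first `k` chosen sets has size at least `(1 − (1 − 1/s)^k) · OPT`. -/
theorem stmt_11 {α : Type*} [DecidableEq α]
    (m : ℕ) (C : Fin m → Finset α) (s : ℕ) (hs : 1 ≤ s)
    (OPT : ℕ)
    (hOPT : OPT = ((Finset.univ : Finset (Fin m)).powerset.filter
        fun J => J.card ≤ s).sup fun J => (J.sup C).card)
    (k : ℕ) (j : ℕ → Fin m)
    (hgreedy : ∀ t < k, ∀ i : Fin m,
      ((C i) \ ((Finset.range t).sup fun r => C (j r))).card ≤
        ((C (j t)) \ ((Finset.range t).sup fun r => C (j r))).card) :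
    (1 - (1 - 1 / (s : ℝ)) ^ k) * OPT ≤
      ((((Finset.range k).sup fun t => C (j t)).card : ℝ)) := by
  set U : ℕ → Finset α := fun t => (Finset.range t).sup fun r => C (j r) with hU
  have hs' : (1 : ℝ) ≤ (s : ℝ) := by exact_mod_cast hs
  have hs0 : (0 : ℝ) < (s : ℝ) := by linarith
  -- Key inequality: OPT ≤ |U t| + s * gain t
  have key : ∀ t, t < k → OPT ≤ (U t).card + s * ((C (j t)) \ U t).card := by
    intro t ht
    have hne : ((Finset.univ : Finset (Fin m)).powerset.filter
        fun J => J.card ≤ s).Nonempty := ⟨∅, by simp⟩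
    obtain ⟨J, hJmem, hJsup⟩ :=
      Finset.exists_mem_eq_sup _ hne fun J => (J.sup C).card
    have hJcard : J.card ≤ s := (Finset.mem_filter.mp hJmem).2
    have h1 : (J.sup C).card ≤ (J.sup C \ U t).card + (U t).card :=
      Finset.card_le_card_sdiff_add_card
    have hsub : J.sup C \ U t ⊆ J.biUnion fun i => C i \ U t := by
      intro x hx
      rw [Finset.mem_sdiff] at hx
      obtain ⟨i, hi, hxi⟩ := Finset.mem_sup.mp hx.1
      exact Finset.mem_biUnion.mpr ⟨i, hi, Finset.mem_sdiff.mpr ⟨hxi, hx.2⟩⟩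
    have h2 : (J.sup C \ U t).card ≤ ∑ i ∈ J, (C i \ U t).card :=
      le_trans (Finset.card_le_card hsub) Finset.card_biUnion_le
    have h3 : ∑ i ∈ J, (C i \ U t).card ≤ J.card * ((C (j t)) \ U t).card := by
      calc ∑ i ∈ J, (C i \ U t).card
          ≤ ∑ _i ∈ J, ((C (j t)) \ U t).card :=
            Finset.sum_le_sum fun i _ => hgreedy t ht i
        _ = J.card * ((C (j t)) \ U t).card := by
            rw [Finset.sum_const, smul_eq_mul]
    have h4 : J.card * ((C (j t)) \ U t).card ≤ s * ((C (j t)) \ U t).card :=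
      Nat.mul_le_mul_right _ hJcard
    have hOPTeq : OPT = (J.sup C).card := by rw [hOPT, hJsup]
    rw [hOPTeq]
    have h5 := le_trans h2 (le_trans h3 h4)
    calc (J.sup C).card ≤ (J.sup C \ U t).card + (U t).card := h1
      _ ≤ s * ((C (j t)) \ U t).card + (U t).card := Nat.add_le_add_right h5 _
      _ = (U t).card + s * ((C (j t)) \ U t).card := Nat.add_comm _ _
  -- card evolution
  have hstep : ∀ t, (U (t + 1)).card = (U t).card + ((C (j t)) \ U t).card := by
    intro t
    have hUsucc : U (t + 1) = C (j t) ∪ U t := by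
      simp [hU, Finset.range_add_one, Finset.sup_insert, Finset.sup_eq_union]
    rw [hUsucc, ← Finset.card_sdiff_add_card, Nat.add_comm]
  have h1s : (0 : ℝ) ≤ 1 - 1 / (s : ℝ) := by
    have : 1 / (s : ℝ) ≤ 1 := by rw [div_le_one hs0]; exact hs'
    linarith
  -- main induction
  have main : ∀ t, t ≤ k → (OPT : ℝ) - (U t).card ≤ (1 - 1 / (s : ℝ)) ^ t * OPT := by
    intro t
    induction t with
    | zero => intro _; simp [hU]
    | succ n ih =>
      intro h
      have hn := ih (by omega)
      have hk := key n (by omega)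
      have hkr : (OPT : ℝ) ≤ (U n).card + (s : ℝ) * ((C (j n)) \ U n).card := by
        exact_mod_cast hk
      have hcr : ((U (n + 1)).card : ℝ) = (U n).card + ((C (j n)) \ U n).card := by
        exact_mod_cast hstep n
      have h2 : ((OPT : ℝ) - (U n).card) / s ≤ ((C (j n)) \ U n).card := by
        rw [div_le_iff₀ hs0, mul_comm]
        linarith
      have e1 : (OPT : ℝ) - (U (n + 1)).card ≤
          (1 - 1 / (s : ℝ)) * ((OPT : ℝ) - (U n).card) := by
        rw [hcr]
        have hexp : (1 - 1 / (s : ℝ)) * ((OPT : ℝ) - (U n).card)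
            = ((OPT : ℝ) - (U n).card) - ((OPT : ℝ) - (U n).card) / s := by
          field_simp
        rw [hexp]
        linarith
      calc (OPT : ℝ) - (U (n + 1)).card
          ≤ (1 - 1 / (s : ℝ)) * ((OPT : ℝ) - (U n).card) := e1
        _ ≤ (1 - 1 / (s : ℝ)) * ((1 - 1 / (s : ℝ)) ^ n * OPT) :=
            mul_le_mul_of_nonneg_left hn h1s
        _ = (1 - 1 / (s : ℝ)) ^ (n + 1) * OPT := by ring
  have hfin := main k le_rfl
  have hexp : (1 - (1 - 1 / (s : ℝ)) ^ k) * (OPT : ℝ)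
      = (OPT : ℝ) - (1 - 1 / (s : ℝ)) ^ k * OPT := by ring
  rw [hexp]
  linarith
end

section
/- Let C_1, …, C_m be finite sets, let s ≥ 1, and let OPT denote the maximum, over all index sets J with |J| ≤ s, of |⋃_{j∈J} C_j|. Let j_1, …, j_s be any sequence of indices such that for each t ≤ s, the set C_{j_t} maximizes |C_j \ ⋃_{r<t} C_{j_r}| over all j ∈ {1, …, m}. Then |⋃_{t≤s} C_{j_t}| ≥ (1 − 1/e) · OPT, where e is Euler's number. -/
/-- The greedy algorithm for Maximum Coverage achieves a `(1 − 1/e)`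
approximation after `s` steps. -/
theorem stmt_12 {α : Type*} [DecidableEq α]
    (m : ℕ) (C : Fin m → Finset α) (s : ℕ) (hs : 1 ≤ s)
    (OPT : ℕ)
    (hOPT : OPT = ((Finset.univ : Finset (Fin m)).powerset.filter
        fun J => J.card ≤ s).sup fun J => (J.sup C).card)
    (j : ℕ → Fin m)
    (hgreedy : ∀ t < s, ∀ i : Fin m,
      ((C i) \ ((Finset.range t).sup fun r => C (j r))).card ≤
        ((C (j t)) \ ((Finset.range t).sup fun r => C (j r))).card) :
    (1 - 1 / Real.exp 1) * OPT ≤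
      ((((Finset.range s).sup fun t => C (j t)).card : ℝ)) := by
  classical
  set U : ℕ → Finset α := fun t => (Finset.range t).sup fun r => C (j r) with hU
  set u : ℕ → ℕ := fun t => (U t).card with hu
  -- OPT is attained by some J
  have hne : ((Finset.univ : Finset (Fin m)).powerset.filter
      fun J => J.card ≤ s).Nonempty := ⟨∅, by simp⟩
  obtain ⟨J, hJmem, hJ⟩ := Finset.exists_mem_eq_sup _ hne (fun J => (J.sup C).card)
  rw [Finset.mem_filter] at hJmem
  have hJcard : J.card ≤ s := hJmem.2
  have hOJ : OPT = (J.sup C).card := by rw [hOPT, hJ]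
  -- step structure
  have hUsucc : ∀ t, U (t + 1) = C (j t) ∪ U t := by
    intro t
    simp [hU, Finset.range_add_one, Finset.sup_insert, Finset.sup_eq_union]
  have husucc : ∀ t, u (t + 1) = (C (j t) \ U t).card + u t := by
    intro t
    simp only [hu]
    rw [hUsucc t, ← Finset.card_sdiff_add_card]
  -- key inequality
  have key : ∀ t < s, OPT ≤ u t + s * (C (j t) \ U t).card := by
    intro t ht
    have h1 : (J.sup C).card ≤ ((J.sup C) \ U t).card + u t :=
      Finset.card_le_card_sdiff_add_card
    have h2 : (J.sup C) \ U t ⊆ J.biUnion fun i => C i \ U t := by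
      intro x hx
      rw [Finset.mem_sdiff, Finset.mem_sup] at hx
      obtain ⟨⟨i, hi, hxi⟩, hxU⟩ := hx
      exact Finset.mem_biUnion.2 ⟨i, hi, Finset.mem_sdiff.2 ⟨hxi, hxU⟩⟩
    have h3 : (J.biUnion fun i => C i \ U t).card ≤
        J.card * (C (j t) \ U t).card := by
      refine le_trans Finset.card_biUnion_le ?_
      exact Finset.sum_le_card_nsmul J _ _ (fun i _ => hgreedy t ht i)
    have h4 : J.card * (C (j t) \ U t).card ≤ s * (C (j t) \ U t).card :=
      Nat.mul_le_mul_right _ hJcard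
    calc OPT = (J.sup C).card := hOJ
      _ ≤ ((J.sup C) \ U t).card + u t := h1
      _ ≤ (J.biUnion fun i => C i \ U t).card + u t := by
          exact Nat.add_le_add_right (Finset.card_le_card h2) _
      _ ≤ J.card * (C (j t) \ U t).card + u t := Nat.add_le_add_right h3 _
      _ ≤ s * (C (j t) \ U t).card + u t := Nat.add_le_add_right h4 _
      _ = u t + s * (C (j t) \ U t).card := by ring
  have hs0 : (0:ℝ) < s := by exact_mod_cast hs
  have hq0 : (0:ℝ) ≤ 1 - 1 / s := by
    rw [sub_nonneg, div_le_one hs0]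
    exact_mod_cast hs
  -- recursive bound over reals
  have main : ∀ t ≤ s, (OPT : ℝ) - u t ≤ (1 - 1 / s) ^ t * OPT := by
    intro t ht
    induction t with
    | zero => simp [hu, hU]
    | succ t ih =>
      have ht' : t < s := ht
      have ih' := ih (le_of_lt ht')
      have hk := key t ht'
      have hstep : (OPT : ℝ) ≤ u t + s * (u (t+1) - u t) := by
        have h := husucc t
        have : (u (t+1) : ℝ) = ((C (j t) \ U t).card : ℝ) + u t := by
          exact_mod_cast congrArg (Nat.cast : ℕ → ℝ) h
        have hk' : (OPT : ℝ) ≤ u t + s * ((C (j t) \ U t).card : ℝ) := by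
          exact_mod_cast hk
        nlinarith [hk']
      have hrec : (OPT : ℝ) - u (t+1) ≤ (1 - 1 / s) * ((OPT : ℝ) - u t) := by
        have : (s : ℝ) * ((OPT : ℝ) - u (t+1)) ≤ ((s : ℝ) - 1) * ((OPT : ℝ) - u t) := by
          nlinarith [hstep]
        have hexp : (1 - 1 / s) * ((OPT : ℝ) - u t)
            = (((s : ℝ) - 1) * ((OPT : ℝ) - u t)) / s := by
          field_simp
        rw [hexp, le_div_iff₀ hs0] at *
        nlinarith [this]
      calc (OPT : ℝ) - u (t+1) ≤ (1 - 1 / s) * ((OPT : ℝ) - u t) := hrec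
        _ ≤ (1 - 1 / s) * ((1 - 1 / s) ^ t * OPT) := by
            exact mul_le_mul_of_nonneg_left ih' hq0
        _ = (1 - 1 / s) ^ (t+1) * OPT := by ring
  have hfin := main s le_rfl
  -- (1 - 1/s)^s ≤ exp (-1)
  have hpow : (1 - 1 / (s:ℝ)) ^ s ≤ Real.exp (-1) := by
    have h1 : (1 - 1 / (s:ℝ)) ≤ Real.exp (-(1 / s)) := by
      have := Real.add_one_le_exp (-(1 / (s:ℝ)))
      linarith
    calc (1 - 1 / (s:ℝ)) ^ s ≤ (Real.exp (-(1 / s))) ^ s :=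
          pow_le_pow_left₀ hq0 h1 s
      _ = Real.exp ((s : ℝ) * (-(1 / s))) := by
          rw [← Real.exp_nat_mul]
      _ = Real.exp (-1) := by
          congr 1
          field_simp
  have hOPT0 : (0:ℝ) ≤ (OPT : ℝ) := Nat.cast_nonneg _
  have hfin2 : (OPT : ℝ) - u s ≤ Real.exp (-1) * OPT := by
    calc (OPT : ℝ) - u s ≤ (1 - 1 / s) ^ s * OPT := hfin
      _ ≤ Real.exp (-1) * OPT := mul_le_mul_of_nonneg_right hpow hOPT0
  have hexpneg : Real.exp (-1) = 1 / Real.exp 1 := by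
    rw [Real.exp_neg]; ring
  have : ((((Finset.range s).sup fun t => C (j t)).card : ℝ)) = (u s : ℝ) := by
    simp [hu, hU]
  rw [this]
  rw [hexpneg] at hfin2
  nlinarith [hfin2]
end
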